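/- (Lemma 4 of the paper.) In the stochastic SMBA setting described below, let β ∈ (0,1), let x ∈ Y, let g ∈ ℝⁿ with ‖g‖ ≤ B_f for some B_f ≥ 0, let α ≥ 0, and set v = Π_Y(x − α·g) and v̄ = Π_{X*}(v). Then ∫_Ω dist²(x⁺(ξ), X*) dP(ξ) ≤ ‖v − v̄‖² − (β(1 − β)/(c·𝓑²))·dist²(x, X) + (2β(1 − β)/(c·𝓑²))·α²·B_f². -/

import Mathlib

open Metric MeasureTheory

/-- The center of the ball associated with the quadratic upper approximation
of `h` at `v` with parameter `L`: `c_v = v - (1/L) ∇h(v)`. -/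
noncomputable def ballCenter {n : ℕ} (h : EuclideanSpace ℝ (Fin n) → ℝ) (L : ℝ)
    (v : EuclideanSpace ℝ (Fin n)) : EuclideanSpace ℝ (Fin n) :=
  v - (1 / L) • gradient h v

/-- The radius term `R_v = ‖∇h(v)‖²/L² - 2 h(v)/L`. -/
noncomputable def ballRadius {n : ℕ} (h : EuclideanSpace ℝ (Fin n) → ℝ) (L : ℝ)
    (v : EuclideanSpace ℝ (Fin n)) : ℝ :=
  ‖gradient h v‖ ^ 2 / L ^ 2 - 2 * h v / L

/-- The adaptive parameter `p_v = ((h(v))₊ L) / (1 - √((R_v)₊)/‖v - c_v‖)`,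
where division by zero is interpreted as zero (Lean's convention). -/
noncomputable def adaptP {n : ℕ} (h : EuclideanSpace ℝ (Fin n) → ℝ) (L : ℝ)
    (v : EuclideanSpace ℝ (Fin n)) : ℝ :=
  max (h v) 0 * L /
    (1 - Real.sqrt (max (ballRadius h L v) 0) / ‖v - ballCenter h L v‖)

/-! Projecting onto the convex set `Y` does not increase the distance to any point of `Y`, in
particular to `v̄ ∈ X* ⊆ X ⊆ Y`, so it suffices to bound `‖z(ξ) - v̄‖²`. Since `h(v̄, ξ) ≤ 0`,
convexity gives `h(v, ξ) ≤ ⟪∇h(v, ξ), v - v̄⟫`, and the closed form of `p_{v,ξ}` gives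
`‖∇h(v, ξ)‖² / 2 ≤ p_{v,ξ} ≤ 𝓑²`; expanding the square then yields
`‖z(ξ) - v̄‖² ≤ ‖v - v̄‖² - 2β(1 - β) (h(v, ξ))₊² / 𝓑²`. Taking expectations, linear regularity at
`v` bounds the expected decrease below by `dist²(v, X) / c`, and `dist(x, X) ≤ dist(v, X) + α‖g‖`
because projecting `x - αg` onto `Y` moves `x ∈ Y` by at most `α‖g‖`. -/

section Convex
variable {E : Type*} [NormedAddCommGroup E] [NormedSpace ℝ E]

theorem ConvexOn.add_fderiv_sub_le {s : Set E} {f : E → ℝ} (hf : ConvexOn ℝ s f) {x y : E}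
    (hx : x ∈ s) (hy : y ∈ s) (hd : DifferentiableAt ℝ f x) :
    f x + fderiv ℝ f x (y - x) ≤ f y := by
  set ℓ : ℝ →ᵃ[ℝ] E := AffineMap.lineMap x y
  have hφ : ConvexOn ℝ (ℓ ⁻¹' s) (f ∘ ℓ) := hf.comp_affineMap ℓ
  have hder : HasDerivAt (f ∘ ℓ) (fderiv ℝ f x (y - x)) 0 :=
    hd.hasFDerivAt.comp_hasDerivAt_of_eq 0 AffineMap.hasDerivAt_lineMap
      (AffineMap.lineMap_apply_zero x y).symm
  have := hφ.le_slope_of_hasDerivAt (by simpa [ℓ] using hx) (by simpa [ℓ] using hy) one_pos hder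
  simp [ℓ, slope_def_field] at this
  rw [map_sub]
  linarith

end Convex

section InnerProductSpace
variable {F : Type*} [NormedAddCommGroup F] [InnerProductSpace ℝ F] {K : Set F} {z w : F}

theorem inner_sub_sub_nonpos_of_forall_norm_sub_le (hK : Convex ℝ K) (hw : w ∈ K)
    (hmin : ∀ y ∈ K, ‖z - w‖ ≤ ‖z - y‖) {y : F} (hy : y ∈ K) :
    inner ℝ (z - w) (y - w) ≤ 0 := by
  have : Nonempty K := ⟨⟨w, hw⟩⟩
  refine (norm_eq_iInf_iff_real_inner_le_zero hK hw).1 (le_antisymm ?_ ?_) y hy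
  · exact le_ciInf fun y => hmin y y.2
  · exact ciInf_le ⟨0, by rintro r ⟨y, rfl⟩; exact norm_nonneg _⟩ (⟨w, hw⟩ : K)

theorem norm_sub_le_of_forall_norm_sub_le (hK : Convex ℝ K) (hw : w ∈ K)
    (hmin : ∀ y ∈ K, ‖z - w‖ ≤ ‖z - y‖) {y : F} (hy : y ∈ K) :
    ‖w - y‖ ≤ ‖z - y‖ := by
  have hvi := inner_sub_sub_nonpos_of_forall_norm_sub_le hK hw hmin hy
  have hexp : ‖z - y‖ ^ 2 = ‖z - w‖ ^ 2 - 2 * inner ℝ (z - w) (y - w) + ‖y - w‖ ^ 2 := by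
    rw [← norm_sub_sq_real, sub_sub_sub_cancel_right]
  rw [norm_sub_rev w]
  nlinarith [sq_nonneg ‖z - w‖, norm_nonneg (z - y), norm_nonneg (y - w)]

theorem norm_sub_smul_sub_sq_le {v w G : F} {s p β : ℝ} (hs : 0 ≤ s)
    (hsG : s ≤ inner ℝ G (v - w)) (hp : 0 < p) (hGp : ‖G‖ ^ 2 ≤ 2 * p) (hβ : 0 ≤ β) :
    ‖v - (β * (s / p)) • G - w‖ ^ 2 ≤ ‖v - w‖ ^ 2 - 2 * β * (1 - β) * (s ^ 2 / p) := by
  set t := β * (s / p)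
  have ht : 0 ≤ t := by positivity
  have hexp : ‖v - t • G - w‖ ^ 2 = ‖v - w‖ ^ 2 - 2 * t * inner ℝ G (v - w) + t ^ 2 * ‖G‖ ^ 2 := by
    rw [sub_right_comm, norm_sub_sq_real, real_inner_smul_right, real_inner_comm, norm_smul,
      Real.norm_eq_abs, mul_pow, sq_abs]
    ring
  have hts : 2 * t * s = 2 * β * (s ^ 2 / p) := by ring
  have htp : t ^ 2 * (2 * p) = 2 * β ^ 2 * (s ^ 2 / p) := by simp only [t]; field_simp
  rw [hexp]
  nlinarith [mul_le_mul_of_nonneg_left hsG (by positivity : 0 ≤ 2 * t),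
    mul_le_mul_of_nonneg_left hGp (sq_nonneg t)]

end InnerProductSpace

section SmbaStep
variable {n : ℕ} {f : EuclideanSpace ℝ (Fin n) → ℝ} {L : ℝ} {v : EuclideanSpace ℝ (Fin n)}

theorem norm_sub_ballCenter (hL : 0 < L) : ‖v - ballCenter f L v‖ = ‖gradient f v‖ / L := by
  rw [ballCenter, sub_sub_cancel, norm_smul, Real.norm_of_nonneg (by positivity)]
  ring

theorem adaptP_of_ballRadius_nonpos (hR : ballRadius f L v ≤ 0) :
    adaptP f L v = max (f v) 0 * L := by
  rw [adaptP, max_eq_right hR, Real.sqrt_zero, zero_div, sub_zero, div_one]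

theorem sq_sqrt_ballRadius_mul_sq (hL : 0 < L) (hR : 0 ≤ ballRadius f L v) :
    √(ballRadius f L v) ^ 2 * L ^ 2 = ‖gradient f v‖ ^ 2 - 2 * f v * L := by
  rw [Real.sq_sqrt hR, ballRadius]; field_simp

/- `2 f(v) L = ‖∇f(v)‖² - L² R` factors as `(‖∇f(v)‖ - L √R) (‖∇f(v)‖ + L √R)`, and the first
factor cancels against the denominator `1 - L √R / ‖∇f(v)‖`. -/
theorem adaptP_of_ballRadius_pos (hL : 0 < L) (hf : 0 < f v) (hR : 0 < ballRadius f L v) :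
    adaptP f L v = ‖gradient f v‖ * (‖gradient f v‖ + L * √(ballRadius f L v)) / 2 := by
  have hr2 := sq_sqrt_ballRadius_mul_sq hL hR.le
  rw [adaptP, max_eq_left hf.le, max_eq_left hR.le, norm_sub_ballCenter hL]
  have hγ0 := norm_nonneg (gradient f v)
  generalize ‖gradient f v‖ = γ at *
  generalize √(ballRadius f L v) = r at *
  have hγ : 0 < γ := by nlinarith [sq_nonneg (r * L)]
  have hrγ : r * L < γ := by nlinarith
  rw [div_div_eq_mul_div, div_eq_iff (sub_ne_zero.2 ((div_lt_one hγ).2 hrγ).ne')]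
  field_simp
  linear_combination hr2

theorem adaptP_bounds (hL : 0 < L) (hf : 0 < f v) :
    0 < adaptP f L v ∧ ‖gradient f v‖ ^ 2 ≤ 2 * adaptP f L v ∧
      adaptP f L v ≤ max (‖gradient f v‖ ^ 2) (f v * L) := by
  rcases le_or_gt (ballRadius f L v) 0 with hR | hR
  · have hγ : ‖gradient f v‖ ^ 2 ≤ 2 * f v * L := by
      rw [ballRadius, sub_nonpos, div_le_div_iff₀ (by positivity) hL] at hR
      nlinarith
    rw [adaptP_of_ballRadius_nonpos hR, max_eq_left hf.le]
    exact ⟨by positivity, by linarith, le_max_right _ _⟩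
  · have hr2 := sq_sqrt_ballRadius_mul_sq hL hR.le
    have hr := Real.sqrt_nonneg (ballRadius f L v)
    have hγ0 := norm_nonneg (gradient f v)
    rw [adaptP_of_ballRadius_pos hL hf hR]
    generalize ‖gradient f v‖ = γ at *
    generalize √(ballRadius f L v) = r at *
    have hγ : 0 < γ := by nlinarith [sq_nonneg (r * L)]
    have hrγ : L * r ≤ γ := by nlinarith
    refine ⟨by positivity, ?_, le_max_of_le_left (by nlinarith)⟩
    nlinarith [mul_nonneg (mul_nonneg hγ0 hL.le) hr]

noncomputable def smbaStep (f : EuclideanSpace ℝ (Fin n) → ℝ) (L β : ℝ)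
    (v : EuclideanSpace ℝ (Fin n)) : EuclideanSpace ℝ (Fin n) :=
  v - (β * (max (f v) 0 / adaptP f L v)) • gradient f v

theorem norm_smbaStep_sub_sq_le {β B : ℝ} {w : EuclideanSpace ℝ (Fin n)}
    (hf : ConvexOn ℝ Set.univ f) (hd : DifferentiableAt ℝ f v) (hL : 0 < L) (hβ0 : 0 ≤ β)
    (hβ1 : β ≤ 1) (hw : f w ≤ 0) (hgrad : ‖gradient f v‖ ^ 2 ≤ B) (hval : f v * L ≤ B) :
    ‖smbaStep f L β v - w‖ ^ 2 ≤ ‖v - w‖ ^ 2 - 2 * β * (1 - β) / B * max (f v) 0 ^ 2 := by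
  rcases le_or_gt (f v) 0 with hv | hv
  · simp [smbaStep, max_eq_right hv]
  obtain ⟨hp, hGp, hpB⟩ := adaptP_bounds hL hv
  have hsG : f v ≤ inner ℝ (gradient f v) (v - w) := by
    have := hf.add_fderiv_sub_le (Set.mem_univ v) (Set.mem_univ w) hd
    rw [← inner_gradient_left, ← neg_sub, inner_neg_right] at this
    linarith
  have hB : f v ^ 2 / B ≤ f v ^ 2 / adaptP f L v :=
    div_le_div_of_nonneg_left (sq_nonneg _) hp (hpB.trans (max_le hgrad hval))
  rw [smbaStep, max_eq_left hv.le]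
  refine (norm_sub_smul_sub_sq_le hv.le hsG hp hGp hβ0).trans (sub_le_sub_left ?_ _)
  calc 2 * β * (1 - β) / B * f v ^ 2 = 2 * β * (1 - β) * (f v ^ 2 / B) := by ring
    _ ≤ 2 * β * (1 - β) * (f v ^ 2 / adaptP f L v) := by gcongr

end SmbaStep

section InfDist
variable {α : Type*} [PseudoMetricSpace α]

theorem sq_infDist_le_two_mul_sq_infDist_add (x y : α) (s : Set α) :
    infDist x s ^ 2 ≤ 2 * infDist y s ^ 2 + 2 * dist x y ^ 2 := by
  have := pow_le_pow_left₀ infDist_nonneg (infDist_le_infDist_add_dist (x := x) (y := y) (s := s)) 2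
  nlinarith [sq_nonneg (infDist y s - dist x y)]

end InfDist

section Integral
variable {Ω : Type*} [MeasurableSpace Ω] {P : Measure Ω} [IsProbabilityMeasure P]

theorem integral_le_sub_mul_integral {φ ψ : Ω → ℝ} {a K : ℝ} (hφm : AEStronglyMeasurable φ P)
    (hφ : ∀ ξ, 0 ≤ φ ξ) (hψ : Integrable ψ P) (hle : ∀ ξ, φ ξ ≤ a - K * ψ ξ) :
    ∫ ξ, φ ξ ∂P ≤ a - K * ∫ ξ, ψ ξ ∂P := by
  have hbound : Integrable (fun ξ => a - K * ψ ξ) P := (integrable_const a).sub (hψ.const_mul K)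
  have hφi : Integrable φ P :=
    hbound.mono' hφm (ae_of_all _ fun ξ => (Real.norm_of_nonneg (hφ ξ)).trans_le (hle ξ))
  calc ∫ ξ, φ ξ ∂P ≤ ∫ ξ, a - K * ψ ξ ∂P := integral_mono hφi hbound hle
    _ = a - K * ∫ ξ, ψ ξ ∂P := by
      rw [integral_sub (integrable_const a) (hψ.const_mul K), integral_const, integral_const_mul]
      simp

end Integral

theorem stmt_11_general {n : ℕ} {Ω : Type*} [MeasurableSpace Ω]
    (P : Measure Ω) [IsProbabilityMeasure P]
    (h : EuclideanSpace ℝ (Fin n) → Ω → ℝ)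
    (hconv : ∀ ξ, ConvexOn ℝ Set.univ (fun y => h y ξ))
    (hdiff : ∀ ξ, Differentiable ℝ (fun y => h y ξ))
    (L : Ω → ℝ) (Lmax : ℝ) (hLpos : ∀ ξ, 0 < L ξ) (hLmax : ∀ ξ, L ξ ≤ Lmax)
    (Y : Set (EuclideanSpace ℝ (Fin n)))
    (hYcv : Convex ℝ Y)
    (X : Set (EuclideanSpace ℝ (Fin n)))
    (hX : X = {y ∈ Y | ∀ ξ, h y ξ ≤ 0})
    (Xstar : Set (EuclideanSpace ℝ (Fin n)))
    (hXsX : Xstar ⊆ X)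
    -- linear regularity condition
    (c : ℝ) (hc : 0 < c)
    (hreg : ∀ y ∈ Y, (infDist y X) ^ 2 ≤ c * ∫ ξ, (max (h y ξ) 0) ^ 2 ∂P)
    (β : ℝ) (hβ : β ∈ Set.Ioo (0 : ℝ) 1)
    (x : EuclideanSpace ℝ (Fin n)) (hx : x ∈ Y)
    (g : EuclideanSpace ℝ (Fin n)) (Bf : ℝ) (hg : ‖g‖ ≤ Bf)
    (α : ℝ) (hα : 0 ≤ α)
    -- `v = Π_Y(x - α g)` : projection of `x - α g` onto `Y`
    (v : EuclideanSpace ℝ (Fin n)) (hvY : v ∈ Y)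
    (hvproj : ∀ y ∈ Y, ‖x - α • g - v‖ ≤ ‖x - α • g - y‖)
    -- `vbar = Π_{X*}(v)` : projection of `v` onto `X*`
    (vbar : EuclideanSpace ℝ (Fin n)) (hvbarmem : vbar ∈ Xstar)
    -- bounds at the point `v`
    (Bh Mh : ℝ)
    (hgradbd : ∀ ξ, ‖gradient (fun u => h u ξ) v‖ ≤ Bh)
    (hhbd : ∀ ξ, |h v ξ| ≤ Mh)
    (B2 : ℝ) (hB2 : B2 = max (Bh ^ 2) (Mh * Lmax))
    -- the SMBA feasibility step (division by zero interpreted as zero)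
    (z : Ω → EuclideanSpace ℝ (Fin n))
    (hz : ∀ ξ, z ξ = v - (β * (max (h v ξ) 0 / adaptP (fun u => h u ξ) (L ξ) v))
        • gradient (fun u => h u ξ) v)
    -- `xplus ξ = Π_Y(z ξ)` : projection of `z ξ` onto `Y`
    (xplus : Ω → EuclideanSpace ℝ (Fin n)) (hxpY : ∀ ξ, xplus ξ ∈ Y)
    (hxpproj : ∀ ξ, ∀ y ∈ Y, ‖z ξ - xplus ξ‖ ≤ ‖z ξ - y‖)
    -- measurability assumptions
    (hmeas1 : Measurable fun ξ => (max (h v ξ) 0) ^ 2)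
    (hmeas2 : Measurable fun ξ => (infDist (xplus ξ) Xstar) ^ 2) :
    ∫ ξ, (infDist (xplus ξ) Xstar) ^ 2 ∂P
      ≤ ‖v - vbar‖ ^ 2 - β * (1 - β) / (c * B2) * (infDist x X) ^ 2
        + 2 * β * (1 - β) / (c * B2) * α ^ 2 * Bf ^ 2 := by
  obtain ⟨hβ0, hβ1⟩ := hβ
  have hvbar : vbar ∈ Y ∧ ∀ ξ, h vbar ξ ≤ 0 := by simpa [hX] using hXsX hvbarmem
  have hB2nn : 0 ≤ B2 := hB2 ▸ le_max_of_le_left (sq_nonneg Bh)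
  have hpoint : ∀ ξ, infDist (xplus ξ) Xstar ^ 2
      ≤ ‖v - vbar‖ ^ 2 - 2 * β * (1 - β) / B2 * max (h v ξ) 0 ^ 2 := fun ξ => by
    have hgradB : ‖gradient (fun u => h u ξ) v‖ ^ 2 ≤ B2 :=
      hB2 ▸ le_max_of_le_left (pow_le_pow_left₀ (norm_nonneg _) (hgradbd ξ) 2)
    have hvalB : h v ξ * L ξ ≤ B2 := hB2 ▸ le_max_of_le_right (mul_le_mul
      ((le_abs_self _).trans (hhbd ξ)) (hLmax ξ) (hLpos ξ).le ((abs_nonneg _).trans (hhbd ξ)))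
    calc infDist (xplus ξ) Xstar ^ 2 ≤ ‖xplus ξ - vbar‖ ^ 2 := by
          gcongr
          · exact infDist_nonneg
          · simpa [dist_eq_norm] using infDist_le_dist_of_mem hvbarmem
      _ ≤ ‖z ξ - vbar‖ ^ 2 := by
          gcongr
          exact norm_sub_le_of_forall_norm_sub_le hYcv (hxpY ξ) (hxpproj ξ) hvbar.1
      _ ≤ _ := by
          rw [show z ξ = smbaStep (fun u => h u ξ) (L ξ) β v from hz ξ]
          exact norm_smbaStep_sub_sq_le (hconv ξ) (hdiff ξ v) (hLpos ξ) hβ0.le hβ1.le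
            (hvbar.2 ξ) hgradB hvalB
  have hint : Integrable (fun ξ => max (h v ξ) 0 ^ 2) P := by
    refine Integrable.of_bound hmeas1.aestronglyMeasurable (Mh ^ 2) (ae_of_all _ fun ξ => ?_)
    rw [Real.norm_of_nonneg (sq_nonneg _)]
    exact pow_le_pow_left₀ (le_max_right _ _)
      (max_le ((le_abs_self _).trans (hhbd ξ)) ((abs_nonneg _).trans (hhbd ξ))) 2
  have hmean := integral_le_sub_mul_integral hmeas2.aestronglyMeasurable (fun ξ => sq_nonneg _)
    hint hpoint
  have hxv : dist x v ≤ α * Bf := by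
    have := norm_sub_le_of_forall_norm_sub_le hYcv hvY hvproj hx
    rw [sub_sub_cancel_left, norm_neg, norm_smul, Real.norm_of_nonneg hα, norm_sub_rev] at this
    exact this.trans (mul_le_mul_of_nonneg_left hg hα)
  have hdx : infDist x X ^ 2 ≤ 2 * infDist v X ^ 2 + 2 * (α * Bf) ^ 2 :=
    (sq_infDist_le_two_mul_sq_infDist_add x v X).trans (by gcongr)
  have hγ : 0 ≤ β * (1 - β) / (c * B2) := div_nonneg (by nlinarith) (by positivity)
  calc ∫ ξ, infDist (xplus ξ) Xstar ^ 2 ∂P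
      ≤ ‖v - vbar‖ ^ 2 - 2 * β * (1 - β) / B2 * ∫ ξ, max (h v ξ) 0 ^ 2 ∂P := hmean
    _ ≤ ‖v - vbar‖ ^ 2 - 2 * β * (1 - β) / B2 * (infDist v X ^ 2 / c) := by
      gcongr
      exact (div_le_iff₀ hc).2 ((hreg v hvY).trans_eq (mul_comm _ _))
    _ ≤ _ := by
      rw [show 2 * β * (1 - β) / B2 * (infDist v X ^ 2 / c)
        = 2 * (β * (1 - β) / (c * B2)) * infDist v X ^ 2 by ring,
        show 2 * β * (1 - β) / (c * B2) = 2 * (β * (1 - β) / (c * B2)) by ring]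
      nlinarith [mul_le_mul_of_nonneg_left hdx hγ]

theorem stmt_11 {n : ℕ} {Ω : Type*} [MeasurableSpace Ω]
    (P : Measure Ω) [IsProbabilityMeasure P]
    (h : EuclideanSpace ℝ (Fin n) → Ω → ℝ)
    (hconv : ∀ ξ, ConvexOn ℝ Set.univ (fun y => h y ξ))
    (hdiff : ∀ ξ, Differentiable ℝ (fun y => h y ξ))
    (L : Ω → ℝ) (Lmax : ℝ) (hLpos : ∀ ξ, 0 < L ξ) (hLmax : ∀ ξ, L ξ ≤ Lmax)
    (hLip : ∀ ξ x y, ‖gradient (fun u => h u ξ) x - gradient (fun u => h u ξ) y‖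
        ≤ L ξ * ‖x - y‖)
    (Y : Set (EuclideanSpace ℝ (Fin n)))
    (hYne : Y.Nonempty) (hYcl : IsClosed Y) (hYcv : Convex ℝ Y)
    (X : Set (EuclideanSpace ℝ (Fin n)))
    (hX : X = {y ∈ Y | ∀ ξ, h y ξ ≤ 0}) (hXne : X.Nonempty)
    (Xstar : Set (EuclideanSpace ℝ (Fin n)))
    (hXsX : Xstar ⊆ X) (hXsne : Xstar.Nonempty)
    (hXscl : IsClosed Xstar) (hXscv : Convex ℝ Xstar)
    -- linear regularity condition
    (c : ℝ) (hc : 0 < c)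
    (hreg : ∀ y ∈ Y, (infDist y X) ^ 2 ≤ c * ∫ ξ, (max (h y ξ) 0) ^ 2 ∂P)
    (β : ℝ) (hβ : β ∈ Set.Ioo (0 : ℝ) 1)
    (x : EuclideanSpace ℝ (Fin n)) (hx : x ∈ Y)
    (g : EuclideanSpace ℝ (Fin n)) (Bf : ℝ) (hBf : 0 ≤ Bf) (hg : ‖g‖ ≤ Bf)
    (α : ℝ) (hα : 0 ≤ α)
    -- `v = Π_Y(x - α g)` : projection of `x - α g` onto `Y`
    (v : EuclideanSpace ℝ (Fin n)) (hvY : v ∈ Y)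
    (hvproj : ∀ y ∈ Y, ‖x - α • g - v‖ ≤ ‖x - α • g - y‖)
    -- `vbar = Π_{X*}(v)` : projection of `v` onto `X*`
    (vbar : EuclideanSpace ℝ (Fin n)) (hvbarmem : vbar ∈ Xstar)
    (hvbarproj : ∀ y ∈ Xstar, ‖v - vbar‖ ≤ ‖v - y‖)
    -- bounds at the point `v`
    (Bh Mh : ℝ) (hBh : 0 < Bh) (hMh : 0 < Mh)
    (hgradbd : ∀ ξ, ‖gradient (fun u => h u ξ) v‖ ≤ Bh)
    (hhbd : ∀ ξ, |h v ξ| ≤ Mh)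
    (B2 : ℝ) (hB2 : B2 = max (Bh ^ 2) (Mh * Lmax))
    -- the SMBA feasibility step (division by zero interpreted as zero)
    (z : Ω → EuclideanSpace ℝ (Fin n))
    (hz : ∀ ξ, z ξ = v - (β * (max (h v ξ) 0 / adaptP (fun u => h u ξ) (L ξ) v))
        • gradient (fun u => h u ξ) v)
    -- `xplus ξ = Π_Y(z ξ)` : projection of `z ξ` onto `Y`
    (xplus : Ω → EuclideanSpace ℝ (Fin n)) (hxpY : ∀ ξ, xplus ξ ∈ Y)
    (hxpproj : ∀ ξ, ∀ y ∈ Y, ‖z ξ - xplus ξ‖ ≤ ‖z ξ - y‖)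
    -- measurability assumptions
    (hmeas1 : Measurable fun ξ => (max (h v ξ) 0) ^ 2)
    (hmeas2 : Measurable fun ξ => (infDist (xplus ξ) Xstar) ^ 2) :
    ∫ ξ, (infDist (xplus ξ) Xstar) ^ 2 ∂P
      ≤ ‖v - vbar‖ ^ 2 - β * (1 - β) / (c * B2) * (infDist x X) ^ 2
        + 2 * β * (1 - β) / (c * B2) * α ^ 2 * Bf ^ 2 :=
  stmt_11_general P h hconv hdiff L Lmax hLpos hLmax Y hYcv X hX Xstar hXsX c hc hreg β hβ x hx g Bf
    hg α hα v hvY hvproj vbar hvbarmem Bh Mh hgradbd hhbd B2 hB2 z hz xplus hxpY hxpproj hmeas1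
    hmeas2
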